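/- In an A-group G, for every w ∈ G, setting u := w ∩ w⁻¹ and v := u⁻¹wu, the element u is the unique element of G such that v is cyclically reduced (v ∩ v⁻¹ = 1) and w = u • v • u⁻¹ (i.e. u ⊂ uv ⊂ uvu⁻¹ = w, all consecutive pairs reduced). -/
import Mathlib


namespace ArtinMedian

/-- A median group, presented via a meet-semilattice operation `∩` (with induced
order `x ⊂ y ↔ x ∩ y = x`) satisfying: (1) `1 ⊂ x`; (2) `x ⊂ y → y ⊂ z →
z⁻¹y ⊂ z⁻¹x`; (3) `x⁻¹(x ∩ y) ⊂ x⁻¹y`. -/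
class MedianGroup (G : Type*) extends Group G where
  meet : G → G → G
  meet_comm : ∀ x y, meet x y = meet y x
  meet_assoc : ∀ x y z, meet (meet x y) z = meet x (meet y z)
  meet_idem : ∀ x, meet x x = x
  one_meet : ∀ x, meet 1 x = 1
  inv_mul_antitone : ∀ x y z, meet x y = x → meet y z = y →
    meet (z⁻¹ * y) (z⁻¹ * x) = z⁻¹ * y
  meet_axiom : ∀ x y, meet (x⁻¹ * meet x y) (x⁻¹ * y) = x⁻¹ * meet x y

namespace MedianGroup

variable {G : Type*} [MedianGroup G]

/-- The order `x ⊂ y` of a median group. -/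
def sub (x y : G) : Prop := meet x y = x

/-- `j` is the join (least upper bound) `x ∪ y`. -/
def isJoin (x y j : G) : Prop :=
  sub x j ∧ sub y j ∧ ∀ c, sub x c → sub y c → sub j c

/-- The join `x ∪ y` exists (`x ∪ y ≠ ∞`). -/
def hasJoin (x y : G) : Prop := ∃ j, isJoin x y j

/-- Orthogonality: `x ⊥ y` iff `x ∩ y = 1` and `x ∪ y` exists. -/
def orth (x y : G) : Prop := meet x y = 1 ∧ hasJoin x y

/-- `G` is a `⊥`-group: `x ⊥ y` implies `x ∪ y = xy`. -/
def PerpGroup (G : Type*) [MedianGroup G] : Prop :=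
  ∀ x y : G, orth x y → isJoin x y (x * y)

/-- Axiom A₁: `x ∪ y` exists and `x⁻¹ ⊂ y⁻¹` imply `x ⊂ y`. -/
def A1 (G : Type*) [MedianGroup G] : Prop :=
  ∀ x y : G, hasJoin x y → sub x⁻¹ y⁻¹ → sub x y

/-- Axiom A₂: `x ∩ y = x⁻¹ ∩ z = y⁻¹ ∩ z = 1` imply `xz ∩ yz ⊂ z`. -/
def A2 (G : Type*) [MedianGroup G] : Prop :=
  ∀ x y z : G, meet x y = 1 → meet x⁻¹ z = 1 → meet y⁻¹ z = 1 →
    sub (meet (x * z) (y * z)) z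

/-- Axiom A₄: if `x ∪ x⁻¹` exists then `x = 1`. -/
def A4 (G : Type*) [MedianGroup G] : Prop :=
  ∀ x : G, hasJoin x x⁻¹ → x = 1

/-- An A-group: a `⊥`-group satisfying A₁, A₂ and A₄. -/
def AGroup (G : Type*) [MedianGroup G] : Prop :=
  PerpGroup G ∧ A1 G ∧ A2 G ∧ A4 G

/-- The median of a median group: `Y(x,y,z) = x·((x⁻¹y) ∩ (x⁻¹z))`. -/
def medY (x y z : G) : G := x * meet (x⁻¹ * y) (x⁻¹ * z)

/-- The interval (cell) `[x,y]` of a median group. -/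
def interval (x y : G) : Set G := {z | sub (x⁻¹ * z) (x⁻¹ * y)}

/-- Convexity of a subset of a median group. -/
def IsConvex (C : Set G) : Prop :=
  ∀ x y z : G, x ∈ C → y ∈ C → medY x z y ∈ C

/-- The conjugation data of `w` by `u'`: `v' := u'⁻¹wu'` is cyclically reduced
and `w = u' • v' • u'⁻¹`, i.e. the pairs `(u', v')` and `(u'v' = wu', u'⁻¹)`
are reduced. -/
def coreWitness {G : Type*} [MedianGroup G] (w u' : G) : Prop :=
  meet (u'⁻¹ * w * u') (u'⁻¹ * w * u')⁻¹ = 1 ∧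
  meet u'⁻¹ (u'⁻¹ * w * u') = 1 ∧
  meet (w * u')⁻¹ u'⁻¹ = 1

/- ------------------------------------------------------------------
   Auxiliary lemmas
------------------------------------------------------------------ -/

lemma sub_refl (x : G) : sub x x := meet_idem x

lemma sub_trans {x y z : G} (h1 : sub x y) (h2 : sub y z) : sub x z := by
  unfold sub at *
  rw [← h1, meet_assoc, h2]

lemma sub_antisymm {x y : G} (h1 : sub x y) (h2 : sub y x) : x = y := by
  unfold sub at *
  rw [← h1, meet_comm, h2]

lemma eq_one_of_sub_one {x : G} (h : sub x 1) : x = 1 := by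
  unfold sub at h
  rw [meet_comm, one_meet] at h
  exact h.symm

lemma meet_sub_left (x y : G) : sub (meet x y) x := by
  unfold sub
  rw [meet_assoc, meet_comm y x, ← meet_assoc, meet_idem]

lemma meet_sub_right (x y : G) : sub (meet x y) y := by
  unfold sub
  rw [meet_assoc, meet_idem]

lemma sub_meet {c x y : G} (h1 : sub c x) (h2 : sub c y) : sub c (meet x y) := by
  unfold sub at *
  rw [← meet_assoc, h1, h2]

lemma meet_mono {x x' y y' : G} (h1 : sub x x') (h2 : sub y y') :
    sub (meet x y) (meet x' y') :=
  sub_meet (sub_trans (meet_sub_left x y) h1) (sub_trans (meet_sub_right x y) h2)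

/-- Axiom (2) restated. -/
lemma sub_inv_mul {x y z : G} (h1 : sub x y) (h2 : sub y z) :
    sub (z⁻¹ * y) (z⁻¹ * x) :=
  inv_mul_antitone x y z h1 h2

/-- Reversal: `a ⊂ c → c⁻¹a ⊂ c⁻¹`. -/
lemma rev {a c : G} (h : sub a c) : sub (c⁻¹ * a) c⁻¹ := by
  have h2 := inv_mul_antitone 1 a c (one_meet a) h
  rwa [mul_one] at h2

/-- Converse reversal: `c⁻¹a ⊂ c⁻¹ → a ⊂ c`. -/
lemma rev' {a c : G} (h : sub (c⁻¹ * a) c⁻¹) : sub a c := by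
  have h2 := rev h
  rwa [inv_inv, mul_inv_cancel_left] at h2

/-- The key "translation" identity: `p ∩ q = p ((p⁻¹) ∩ (p⁻¹ q))`. -/
lemma S1 (p q : G) : meet p q = p * meet p⁻¹ (p⁻¹ * q) := by
  have hAp : sub (meet p q) p := meet_sub_left p q
  have hAq : sub (meet p q) q := meet_sub_right p q
  have h1 : sub (p⁻¹ * meet p q) (p⁻¹ * q) := meet_axiom p q
  have h2 : sub (p⁻¹ * meet p q) p⁻¹ := rev hAp
  have h3 : sub (p⁻¹ * meet p q) (meet p⁻¹ (p⁻¹ * q)) := sub_meet h2 h1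
  have hBp : sub (meet p⁻¹ (p⁻¹ * q)) p⁻¹ := meet_sub_left _ _
  have hBq : sub (meet p⁻¹ (p⁻¹ * q)) (p⁻¹ * q) := meet_sub_right _ _
  have h4 : sub (p * meet p⁻¹ (p⁻¹ * q)) q := by
    have h5 := meet_axiom p⁻¹ (p⁻¹ * q)
    rwa [inv_inv, mul_inv_cancel_left] at h5
  have h5 : sub (p * meet p⁻¹ (p⁻¹ * q)) p := by
    have h6 := rev hBp
    rwa [inv_inv] at h6
  have h6 : sub (p * meet p⁻¹ (p⁻¹ * q)) (meet p q) := sub_meet h5 h4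
  have h7 : sub (q⁻¹ * meet p q) (q⁻¹ * (p * meet p⁻¹ (p⁻¹ * q))) :=
    sub_inv_mul h6 hAq
  have h8 : sub ((p⁻¹ * q)⁻¹ * meet p⁻¹ (p⁻¹ * q)) ((p⁻¹ * q)⁻¹ * (p⁻¹ * meet p q)) :=
    sub_inv_mul h3 hBq
  rw [show (p⁻¹ * q)⁻¹ * meet p⁻¹ (p⁻¹ * q) = q⁻¹ * (p * meet p⁻¹ (p⁻¹ * q)) from by group,
      show (p⁻¹ * q)⁻¹ * (p⁻¹ * meet p q) = q⁻¹ * meet p q from by group] at h8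
  have h9 : q⁻¹ * meet p q = q⁻¹ * (p * meet p⁻¹ (p⁻¹ * q)) := sub_antisymm h7 h8
  exact mul_left_cancel h9

/-- `u ⊂ x` iff the pair `(u, u⁻¹x)` is reduced. -/
lemma sub_iff_reduced {u x : G} : sub u x ↔ meet u⁻¹ (u⁻¹ * x) = 1 := by
  constructor
  · intro h
    have h2 := S1 u x
    unfold sub at h
    rw [h] at h2
    have h3 : u * meet u⁻¹ (u⁻¹ * x) = u * 1 := by rw [mul_one]; exact h2.symm
    exact mul_left_cancel h3
  · intro h
    unfold sub
    rw [S1 u x, h, mul_one]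

/-- If `(x, y)` is reduced then `x ⊂ xy`. -/
lemma lemG {x y : G} (h : meet x⁻¹ y = 1) : sub x (x * y) := by
  apply sub_iff_reduced.mpr
  rwa [inv_mul_cancel_left]

/-- If `a ∩ b = 1` then `a⁻¹ ⊂ a⁻¹ b`. -/
lemma coro {a b : G} (h : meet a b = 1) : sub a⁻¹ (a⁻¹ * b) :=
  lemG (by rwa [inv_inv])

/-- `a ⊂ b ⊂ c` implies `a⁻¹b ⊂ a⁻¹c`. -/
lemma lemL {a b c : G} (h1 : sub a b) (h2 : sub b c) : sub (a⁻¹ * b) (a⁻¹ * c) := by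
  apply rev'
  have h3 : sub (c⁻¹ * b) (c⁻¹ * a) := sub_inv_mul h1 h2
  rw [show (a⁻¹ * c)⁻¹ * (a⁻¹ * b) = c⁻¹ * b from by group,
      show (a⁻¹ * c)⁻¹ = c⁻¹ * a from by group]
  exact h3

/-- If `(x, y)` is reduced and `g ⊂ y` then `xg ⊂ xy`. -/
lemma lemF {x y g : G} (h : meet x⁻¹ y = 1) (hg : sub g y) : sub (x * g) (x * y) := by
  apply rev'
  have h1 : sub (y⁻¹ * g) y⁻¹ := rev hg
  have h2 : sub y⁻¹ (y⁻¹ * x⁻¹) := coro (by rwa [meet_comm])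
  have h3 := sub_trans h1 h2
  rw [show (x * y)⁻¹ * (x * g) = y⁻¹ * g from by group,
      show (x * y)⁻¹ = y⁻¹ * x⁻¹ from by group]
  exact h3

/-- Meet cancellation: `((a∩b)⁻¹a) ∩ ((a∩b)⁻¹b) = 1`. -/
lemma meet_cancel (a b : G) :
    meet ((meet a b)⁻¹ * a) ((meet a b)⁻¹ * b) = 1 := by
  have hred_a : meet (meet a b)⁻¹ ((meet a b)⁻¹ * a) = 1 :=
    sub_iff_reduced.mp (meet_sub_left a b)
  have hred_b : meet (meet a b)⁻¹ ((meet a b)⁻¹ * b) = 1 :=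
    sub_iff_reduced.mp (meet_sub_right a b)
  have hma : sub (meet ((meet a b)⁻¹ * a) ((meet a b)⁻¹ * b)) ((meet a b)⁻¹ * a) :=
    meet_sub_left _ _
  have hmb : sub (meet ((meet a b)⁻¹ * a) ((meet a b)⁻¹ * b)) ((meet a b)⁻¹ * b) :=
    meet_sub_right _ _
  have h1 : sub (meet a b * meet ((meet a b)⁻¹ * a) ((meet a b)⁻¹ * b)) a := by
    have h := lemF hred_a hma
    rwa [mul_inv_cancel_left] at h
  have h2 : sub (meet a b * meet ((meet a b)⁻¹ * a) ((meet a b)⁻¹ * b)) b := by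
    have h := lemF hred_b hmb
    rwa [mul_inv_cancel_left] at h
  have h3 : sub (meet a b * meet ((meet a b)⁻¹ * a) ((meet a b)⁻¹ * b)) (meet a b) :=
    sub_meet h1 h2
  have h4 : sub (meet ((meet a b)⁻¹ * a) ((meet a b)⁻¹ * b)) (meet a b)⁻¹ := by
    have h := rev h3
    rwa [inv_mul_cancel_left] at h
  have h5 : sub (meet ((meet a b)⁻¹ * a) ((meet a b)⁻¹ * b))
      (meet (meet a b)⁻¹ ((meet a b)⁻¹ * a)) := sub_meet h4 hma
  rw [hred_a] at h5
  exact eq_one_of_sub_one h5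

/-- Elements with a common upper bound have a join. -/
lemma isJoin_of_ub {x y c : G} (hx : sub x c) (hy : sub y c) :
    isJoin x y (c * meet (c⁻¹ * x) (c⁻¹ * y)) := by
  have hmx : sub (meet (c⁻¹ * x) (c⁻¹ * y)) (c⁻¹ * x) := meet_sub_left _ _
  have hmy : sub (meet (c⁻¹ * x) (c⁻¹ * y)) (c⁻¹ * y) := meet_sub_right _ _
  have hxc : sub (c⁻¹ * x) c⁻¹ := rev hx
  have hyc : sub (c⁻¹ * y) c⁻¹ := rev hy
  have hx' : sub x (c * meet (c⁻¹ * x) (c⁻¹ * y)) := by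
    have h := sub_inv_mul hmx hxc
    rwa [inv_inv, mul_inv_cancel_left] at h
  have hy' : sub y (c * meet (c⁻¹ * x) (c⁻¹ * y)) := by
    have h := sub_inv_mul hmy hyc
    rwa [inv_inv, mul_inv_cancel_left] at h
  refine ⟨hx', hy', ?_⟩
  intro d hxd hyd
  have hdc : sub (meet d c) c := meet_sub_right _ _
  have h1 : sub (c⁻¹ * meet d c) (c⁻¹ * x) := sub_inv_mul (sub_meet hxd hx) hdc
  have h2 : sub (c⁻¹ * meet d c) (c⁻¹ * y) := sub_inv_mul (sub_meet hyd hy) hdc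
  have h3 : sub (c⁻¹ * meet d c) (meet (c⁻¹ * x) (c⁻¹ * y)) := sub_meet h1 h2
  have h4 : sub (meet (c⁻¹ * x) (c⁻¹ * y)) c⁻¹ := sub_trans hmx hxc
  have h5 := sub_inv_mul h3 h4
  rw [inv_inv, mul_inv_cancel_left] at h5
  exact sub_trans h5 (meet_sub_left d c)

lemma hasJoin_of_ub {x y c : G} (hx : sub x c) (hy : sub y c) : hasJoin x y :=
  ⟨_, isJoin_of_ub hx hy⟩

/-- In a `⊥`-group, orthogonal elements with a common upper bound commute and
their product is their join. -/
lemma perp_comm (hP : PerpGroup G) {x y c : G} (h : meet x y = 1)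
    (hx : sub x c) (hy : sub y c) :
    x * y = y * x ∧ sub x (x * y) ∧ sub y (x * y) ∧ sub (x * y) c := by
  have J1 : isJoin x y (x * y) := hP x y ⟨h, hasJoin_of_ub hx hy⟩
  have J2 : isJoin y x (y * x) := hP y x ⟨by rw [meet_comm]; exact h, hasJoin_of_ub hy hx⟩
  have J2' : isJoin x y (y * x) := ⟨J2.2.1, J2.1, fun d h1 h2 => J2.2.2 d h2 h1⟩
  have hxy : x * y = y * x :=
    sub_antisymm (J1.2.2 _ J2'.1 J2'.2.1) (J2'.2.2 _ J1.1 J1.2.1)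
  exact ⟨hxy, J1.1, J1.2.1, J1.2.2 c hx hy⟩

/-- `v ∩ s = v·(u⁻¹ ∩ v⁻¹)` in the conjugation setup. -/
lemma meet_v_s (u w : G) :
    meet (u⁻¹ * w * u) (u⁻¹ * w) = (u⁻¹ * w * u) * meet u⁻¹ (u⁻¹ * w⁻¹ * u) := by
  rw [S1 (u⁻¹ * w * u) (u⁻¹ * w),
      show (u⁻¹ * w * u)⁻¹ * (u⁻¹ * w) = u⁻¹ from by group,
      meet_comm (u⁻¹ * w * u)⁻¹ u⁻¹,
      show (u⁻¹ * w * u)⁻¹ = u⁻¹ * w⁻¹ * u from by group]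

/-- `v⁻¹ ∩ s' = v⁻¹·(u⁻¹ ∩ v)` in the conjugation setup. -/
lemma meet_vinv_s' (u w : G) :
    meet (u⁻¹ * w * u)⁻¹ (u⁻¹ * w⁻¹) = (u⁻¹ * w * u)⁻¹ * meet u⁻¹ (u⁻¹ * w * u) := by
  rw [S1 ((u⁻¹ * w * u)⁻¹) (u⁻¹ * w⁻¹),
      show ((u⁻¹ * w * u)⁻¹)⁻¹ * (u⁻¹ * w⁻¹) = u⁻¹ from by group,
      meet_comm ((u⁻¹ * w * u)⁻¹)⁻¹ u⁻¹,
      show ((u⁻¹ * w * u)⁻¹)⁻¹ = u⁻¹ * w * u from by group]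

/-- `z := u⁻¹ ∩ (u⁻¹wu)` commutes with `u⁻¹wu` when `u ⊂ w` and `u ⊂ w⁻¹`. -/
lemma comm_aux (hP : PerpGroup G) {u w : G} (h1 : sub u w) (h2 : sub u w⁻¹) :
    meet u⁻¹ (u⁻¹ * w * u) * (u⁻¹ * w * u) = (u⁻¹ * w * u) * meet u⁻¹ (u⁻¹ * w * u) := by
  have hz_u : sub (meet u⁻¹ (u⁻¹ * w * u)) u⁻¹ := meet_sub_left _ _
  have hwu_w : sub (w * u) w := by
    have h := rev h2
    rwa [inv_inv] at h
  have ha : meet u (w * u) = u * meet u⁻¹ (u⁻¹ * w * u) := by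
    rw [S1 u (w * u), mul_assoc]
  have hMC := meet_cancel u (w * u)
  rw [ha,
      show (u * meet u⁻¹ (u⁻¹ * w * u))⁻¹ * u = (meet u⁻¹ (u⁻¹ * w * u))⁻¹ from by group,
      show (u * meet u⁻¹ (u⁻¹ * w * u))⁻¹ * (w * u)
          = (meet u⁻¹ (u⁻¹ * w * u))⁻¹ * (u⁻¹ * w * u) from by group] at hMC
  have hau : sub (u * meet u⁻¹ (u⁻¹ * w * u)) u := by
    apply rev'
    rw [inv_mul_cancel_left]
    exact hz_u
  have hawu : sub (u * meet u⁻¹ (u⁻¹ * w * u)) (w * u) := by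
    rw [← ha]; exact meet_sub_right u (w * u)
  have hub1 := lemL hau h1
  have hub2 := lemL hawu hwu_w
  rw [show (u * meet u⁻¹ (u⁻¹ * w * u))⁻¹ * u = (meet u⁻¹ (u⁻¹ * w * u))⁻¹ from by group]
    at hub1
  rw [show (u * meet u⁻¹ (u⁻¹ * w * u))⁻¹ * (w * u)
      = (meet u⁻¹ (u⁻¹ * w * u))⁻¹ * (u⁻¹ * w * u) from by group] at hub2
  have hc := perp_comm hP hMC hub1 hub2
  have h' : (meet u⁻¹ (u⁻¹ * w * u))⁻¹ * (u⁻¹ * w * u)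
      = (u⁻¹ * w * u) * (meet u⁻¹ (u⁻¹ * w * u))⁻¹ :=
    mul_left_cancel (hc.1.trans (by group))
  calc meet u⁻¹ (u⁻¹ * w * u) * (u⁻¹ * w * u)
      = meet u⁻¹ (u⁻¹ * w * u) * ((u⁻¹ * w * u) * (meet u⁻¹ (u⁻¹ * w * u))⁻¹)
        * meet u⁻¹ (u⁻¹ * w * u) := by group
    _ = meet u⁻¹ (u⁻¹ * w * u) * ((meet u⁻¹ (u⁻¹ * w * u))⁻¹ * (u⁻¹ * w * u))
        * meet u⁻¹ (u⁻¹ * w * u) := by rw [← h']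
    _ = (u⁻¹ * w * u) * meet u⁻¹ (u⁻¹ * w * u) := by group

/-- Key existence lemma: if `u ⊂ w`, `u ⊂ w⁻¹` and `(u⁻¹w) ∩ (u⁻¹w⁻¹) = 1`,
then the pair `(u, u⁻¹wu)` is reduced. -/
lemma key (hP : PerpGroup G) (hA4 : A4 G) {u w : G}
    (h1 : sub u w) (h2 : sub u w⁻¹)
    (hss : meet (u⁻¹ * w) (u⁻¹ * w⁻¹) = 1) :
    meet u⁻¹ (u⁻¹ * w * u) = 1 := by
  have h1' : sub u (w⁻¹)⁻¹ := by rwa [inv_inv]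
  have hD2 : meet u⁻¹ (u⁻¹ * w⁻¹) = 1 := sub_iff_reduced.mp h2
  have hzv := comm_aux hP h1 h2
  have hz'v' := comm_aux hP h2 h1'
  have hvs := meet_v_s u w
  have hv's' := meet_vinv_s' u w
  -- abbreviations (purely by name): Z = meet u⁻¹ (u⁻¹*w*u), Z' = meet u⁻¹ (u⁻¹*w⁻¹*u)
  have hD1 : meet u⁻¹ (u⁻¹ * w) = 1 := sub_iff_reduced.mp h1
  have hvz'_s : sub ((u⁻¹ * w * u) * meet u⁻¹ (u⁻¹ * w⁻¹ * u)) (u⁻¹ * w) := by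
    rw [← hvs]; exact meet_sub_right _ _
  have hv'z_s' : sub ((u⁻¹ * w * u)⁻¹ * meet u⁻¹ (u⁻¹ * w * u)) (u⁻¹ * w⁻¹) := by
    rw [← hv's']; exact meet_sub_right _ _
  have h5 : meet (meet u⁻¹ (u⁻¹ * w * u)) ((u⁻¹ * w * u) * meet u⁻¹ (u⁻¹ * w⁻¹ * u)) = 1 := by
    have h := meet_mono (meet_sub_left u⁻¹ (u⁻¹ * w * u)) hvz'_s
    rw [hD1] at h
    exact eq_one_of_sub_one h
  have h5' : meet (meet u⁻¹ (u⁻¹ * w⁻¹ * u)) ((u⁻¹ * w * u)⁻¹ * meet u⁻¹ (u⁻¹ * w * u)) = 1 := by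
    have h := meet_mono (meet_sub_left u⁻¹ (u⁻¹ * w⁻¹ * u)) hv'z_s'
    rw [hD2] at h
    exact eq_one_of_sub_one h
  have hz_v : sub (meet u⁻¹ (u⁻¹ * w * u)) (u⁻¹ * w * u) := meet_sub_right _ _
  have hz'_vinv : sub (meet u⁻¹ (u⁻¹ * w⁻¹ * u)) (u⁻¹ * w * u)⁻¹ := by
    rw [show (u⁻¹ * w * u)⁻¹ = u⁻¹ * w⁻¹ * u from by group]
    exact meet_sub_right _ _
  have hvz'_v : sub ((u⁻¹ * w * u) * meet u⁻¹ (u⁻¹ * w⁻¹ * u)) (u⁻¹ * w * u) := by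
    apply rev'
    rw [inv_mul_cancel_left]
    exact hz'_vinv
  have hvz_vinv : sub ((u⁻¹ * w * u)⁻¹ * meet u⁻¹ (u⁻¹ * w * u)) (u⁻¹ * w * u)⁻¹ := rev hz_v
  have hP6 := perp_comm hP h5 hz_v hvz'_v
  have hP7 := perp_comm hP h5' hz'_vinv hvz_vinv
  -- commutation of Z and Z'
  have hcomm : meet u⁻¹ (u⁻¹ * w * u) * meet u⁻¹ (u⁻¹ * w⁻¹ * u)
      = meet u⁻¹ (u⁻¹ * w⁻¹ * u) * meet u⁻¹ (u⁻¹ * w * u) := by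
    apply mul_left_cancel (a := u⁻¹ * w * u)
    have e1 : (u⁻¹ * w * u) * (meet u⁻¹ (u⁻¹ * w * u) * meet u⁻¹ (u⁻¹ * w⁻¹ * u))
        = meet u⁻¹ (u⁻¹ * w * u) * ((u⁻¹ * w * u) * meet u⁻¹ (u⁻¹ * w⁻¹ * u)) := by
      rw [← mul_assoc, ← hzv, mul_assoc]
    have e3 : ((u⁻¹ * w * u) * meet u⁻¹ (u⁻¹ * w⁻¹ * u)) * meet u⁻¹ (u⁻¹ * w * u)
        = (u⁻¹ * w * u) * (meet u⁻¹ (u⁻¹ * w⁻¹ * u) * meet u⁻¹ (u⁻¹ * w * u)) :=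
      mul_assoc _ _ _
    exact e1.trans (hP6.1.trans e3)
  -- Z*Z' ⊂ s'
  have H6 := sub_inv_mul hP6.2.1 hP6.2.2.2
  rw [show meet u⁻¹ (u⁻¹ * w * u) * ((u⁻¹ * w * u) * meet u⁻¹ (u⁻¹ * w⁻¹ * u))
      = (u⁻¹ * w * u) * (meet u⁻¹ (u⁻¹ * w * u) * meet u⁻¹ (u⁻¹ * w⁻¹ * u)) from by
        rw [← mul_assoc, hzv, mul_assoc],
      inv_mul_cancel_left] at H6
  have h8a : sub (meet u⁻¹ (u⁻¹ * w * u) * meet u⁻¹ (u⁻¹ * w⁻¹ * u)) (u⁻¹ * w⁻¹) :=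
    sub_trans H6 hv'z_s'
  -- Z'*Z ⊂ s
  have hz'vinv_comm : meet u⁻¹ (u⁻¹ * w⁻¹ * u) * (u⁻¹ * w * u)⁻¹
      = (u⁻¹ * w * u)⁻¹ * meet u⁻¹ (u⁻¹ * w⁻¹ * u) := by
    rw [show (u⁻¹ * w * u)⁻¹ = u⁻¹ * w⁻¹ * u from by group]
    exact hz'v'
  have H7 := sub_inv_mul hP7.2.1 hP7.2.2.2
  rw [inv_inv,
      show meet u⁻¹ (u⁻¹ * w⁻¹ * u) * ((u⁻¹ * w * u)⁻¹ * meet u⁻¹ (u⁻¹ * w * u))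
      = (u⁻¹ * w * u)⁻¹ * (meet u⁻¹ (u⁻¹ * w⁻¹ * u) * meet u⁻¹ (u⁻¹ * w * u)) from by
        rw [← mul_assoc, hz'vinv_comm, mul_assoc],
      mul_inv_cancel_left] at H7
  have h8b : sub (meet u⁻¹ (u⁻¹ * w⁻¹ * u) * meet u⁻¹ (u⁻¹ * w * u)) (u⁻¹ * w) :=
    sub_trans H7 hvz'_s
  -- Z*Z' = 1
  have hzz' : meet u⁻¹ (u⁻¹ * w * u) * meet u⁻¹ (u⁻¹ * w⁻¹ * u) = 1 := by
    have hs : sub (meet u⁻¹ (u⁻¹ * w * u) * meet u⁻¹ (u⁻¹ * w⁻¹ * u))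
        (meet (u⁻¹ * w) (u⁻¹ * w⁻¹)) :=
      sub_meet (by rw [hcomm]; exact h8b) h8a
    rw [hss] at hs
    exact eq_one_of_sub_one hs
  have hz'eq : meet u⁻¹ (u⁻¹ * w⁻¹ * u) = (meet u⁻¹ (u⁻¹ * w * u))⁻¹ := by
    rw [← one_mul (meet u⁻¹ (u⁻¹ * w⁻¹ * u)), ← inv_mul_cancel (meet u⁻¹ (u⁻¹ * w * u)),
        mul_assoc, hzz', mul_one]
  -- kill via A4
  have hZinv : sub (meet u⁻¹ (u⁻¹ * w * u))⁻¹ u⁻¹ := by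
    rw [← hz'eq]; exact meet_sub_left u⁻¹ (u⁻¹ * w⁻¹ * u)
  exact hA4 _ (hasJoin_of_ub (meet_sub_left u⁻¹ (u⁻¹ * w * u)) hZinv)

/-- Lemma 4.2: in an A-group, for `w ∈ G`, the element
`u := w ∩ w⁻¹` is the unique element of `G` such that `v := u⁻¹wu` is
cyclically reduced and `w = u • v • u⁻¹`. -/
theorem cyclically_reduced_core {G : Type*} [MedianGroup G]
    (hG : AGroup G) (w : G) :
    coreWitness w (meet w w⁻¹) ∧
    ∀ u' : G, coreWitness w u' → u' = meet w w⁻¹ := by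
  obtain ⟨hP, -, hA2, hA4⟩ := hG
  have h1 : sub (meet w w⁻¹) w := meet_sub_left _ _
  have h2 : sub (meet w w⁻¹) w⁻¹ := meet_sub_right _ _
  have hss : meet ((meet w w⁻¹)⁻¹ * w) ((meet w w⁻¹)⁻¹ * w⁻¹) = 1 := meet_cancel w w⁻¹
  have hz1 : meet (meet w w⁻¹)⁻¹ ((meet w w⁻¹)⁻¹ * w * meet w w⁻¹) = 1 :=
    key hP hA4 h1 h2 hss
  have hz2 : meet (meet w w⁻¹)⁻¹ ((meet w w⁻¹)⁻¹ * w⁻¹ * meet w w⁻¹) = 1 := by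
    have h1' : sub (meet w w⁻¹) (w⁻¹)⁻¹ := by rwa [inv_inv]
    have hss' : meet ((meet w w⁻¹)⁻¹ * w⁻¹) ((meet w w⁻¹)⁻¹ * (w⁻¹)⁻¹) = 1 := by
      rw [inv_inv, meet_comm]; exact hss
    exact key hP hA4 h2 h1' hss'
  have hD2 : meet (meet w w⁻¹)⁻¹ ((meet w w⁻¹)⁻¹ * w⁻¹) = 1 := sub_iff_reduced.mp h2
  have hv_s : sub ((meet w w⁻¹)⁻¹ * w * meet w w⁻¹) ((meet w w⁻¹)⁻¹ * w) := by
    unfold sub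
    rw [meet_v_s, hz2, mul_one]
  have hv'_s' : sub ((meet w w⁻¹)⁻¹ * w * meet w w⁻¹)⁻¹ ((meet w w⁻¹)⁻¹ * w⁻¹) := by
    unfold sub
    rw [meet_vinv_s', hz1, mul_one]
  constructor
  · refine ⟨?_, hz1, ?_⟩
    · -- v is cyclically reduced
      have hmono := meet_mono hv_s hv'_s'
      rw [hss] at hmono
      exact eq_one_of_sub_one hmono
    · -- (wu, u⁻¹) is reduced
      rw [mul_inv_rev, meet_comm]
      exact hD2
  · intro u' hw'
    obtain ⟨hc1, hc2, hc3⟩ := hw'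
    have hsub1 : sub u' (w * u') := by
      have h := lemG hc2
      rwa [show u' * (u'⁻¹ * w * u') = w * u' from by group] at h
    have hsub2 : sub (w * u') w := by
      have h := lemG hc3
      rwa [show (w * u') * u'⁻¹ = w from by group] at h
    have hu'w : sub u' w := sub_trans hsub1 hsub2
    have hu'w' : sub u' w⁻¹ := by
      have h := lemG (x := u') (y := (w * u')⁻¹) (by rw [meet_comm]; exact hc3)
      rwa [show u' * (w * u')⁻¹ = w⁻¹ from by group] at h
    have hu'u : sub u' (meet w w⁻¹) := sub_meet hu'w hu'w'
    have hm : meet (u'⁻¹ * w * u')⁻¹ u'⁻¹ = 1 := by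
      have hma : sub (u'⁻¹ * w * u')⁻¹ ((u'⁻¹ * w * u')⁻¹ * u'⁻¹) :=
        coro (by rw [meet_comm]; exact hc2)
      rw [show (u'⁻¹ * w * u')⁻¹ * u'⁻¹ = (w * u')⁻¹ from by group] at hma
      have h := meet_mono hma (sub_refl u'⁻¹)
      rw [hc3] at h
      exact eq_one_of_sub_one h
    have hA2app := hA2 (u'⁻¹ * w * u') (u'⁻¹ * w * u')⁻¹ u'⁻¹ hc1 hm
      (by rw [inv_inv, meet_comm]; exact hc2)
    rw [show (u'⁻¹ * w * u') * u'⁻¹ = u'⁻¹ * w from by group,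
        show (u'⁻¹ * w * u')⁻¹ * u'⁻¹ = u'⁻¹ * w⁻¹ from by group] at hA2app
    have hk1 : sub (u'⁻¹ * meet w w⁻¹) (u'⁻¹ * w) := lemL hu'u h1
    have hk2 : sub (u'⁻¹ * meet w w⁻¹) (u'⁻¹ * w⁻¹) := lemL hu'u h2
    have hk : sub (u'⁻¹ * meet w w⁻¹) u'⁻¹ := sub_trans (sub_meet hk1 hk2) hA2app
    have hred : meet u'⁻¹ (u'⁻¹ * meet w w⁻¹) = 1 := sub_iff_reduced.mp hu'u
    have hone : u'⁻¹ * meet w w⁻¹ = 1 := by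
      unfold sub at hk
      rw [meet_comm, hred] at hk
      exact hk.symm
    exact inv_mul_eq_one.mp hone

end MedianGroup
end ArtinMedian
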